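/- Let (X₁, Σ₁, μ₁) and (X₂, Σ₂, μ₂) be complete σ-finite measure spaces and let F : X₁ × X₂ → [−∞, ∞] be measurable with respect to the completion of the product σ-algebra Σ₁ ⊗ Σ₂ with respect to the product measure μ₁ ⊗ μ₂. Then the function G : X₁ → [−∞, ∞] defined by G(x₁) := essinf_{x₂ ∈ X₂} F(x₁, x₂) is Σ₁-measurable. -/
import Mathlib


open MeasureTheory Filter Topology ENNReal

private lemma essInf_eq_iSup_rat {α : Type*} [MeasurableSpace α] (μ : Measure α)
    (f : α → EReal) :
    essInf f μ = ⨆ q : ℚ, if μ {x | f x < ((q : ℝ) : EReal)} = 0 then ((q : ℝ) : EReal) else ⊥ := by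
  rw [essInf_eq_sSup]
  apply le_antisymm
  · apply sSup_le
    intro a ha
    apply le_of_forall_lt
    intro b hb
    obtain ⟨q, hbq, hqa⟩ := EReal.exists_rat_btwn_of_lt hb
    have hq : μ {x | f x < ((q : ℝ) : EReal)} = 0 :=
      measure_mono_null (fun x hx => lt_trans hx hqa) ha
    calc b < ((q : ℝ) : EReal) := hbq
    _ = if μ {x | f x < ((q : ℝ) : EReal)} = 0 then ((q : ℝ) : EReal) else ⊥ := by rw [if_pos hq]
    _ ≤ _ := le_iSup (fun q : ℚ => if μ {x | f x < ((q : ℝ) : EReal)} = 0 then ((q : ℝ) : EReal) else ⊥) q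
  · apply iSup_le
    intro q
    split_ifs with h
    · exact le_sSup h
    · exact bot_le

private lemma measurable_essInf_prod
    {X₁ X₂ : Type*} [MeasurableSpace X₁] [MeasurableSpace X₂]
    (μ₂ : Measure X₂) [SigmaFinite μ₂]
    (G : X₁ × X₂ → EReal) (hG : Measurable G) :
    Measurable fun x₁ => essInf (fun x₂ => G (x₁, x₂)) μ₂ := by
  simp_rw [essInf_eq_iSup_rat]
  apply Measurable.iSup
  intro q
  have hs : MeasurableSet {p : X₁ × X₂ | G p < ((q : ℝ) : EReal)} :=
    measurableSet_lt hG measurable_const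
  have hmeas : Measurable fun x₁ => μ₂ (Prod.mk x₁ ⁻¹' {p : X₁ × X₂ | G p < ((q : ℝ) : EReal)}) :=
    measurable_measure_prodMk_left hs
  have hset : MeasurableSet {x₁ : X₁ | μ₂ {x₂ | G (x₁, x₂) < ((q : ℝ) : EReal)} = 0} := by
    have : {x₁ : X₁ | μ₂ {x₂ | G (x₁, x₂) < ((q : ℝ) : EReal)} = 0}
        = (fun x₁ => μ₂ (Prod.mk x₁ ⁻¹' {p : X₁ × X₂ | G p < ((q : ℝ) : EReal)})) ⁻¹' {0} := rfl
    rw [this]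
    exact hmeas (measurableSet_singleton 0)
  exact Measurable.ite hset measurable_const measurable_const

/-- Lemma 6.1 of the paper, second part: measurability of a partial
essential infimum when the function is only measurable w.r.t. the completion of the
product σ-algebra w.r.t. the product measure (`NullMeasurable` w.r.t. `μ₁.prod μ₂`),
the underlying σ-finite measure spaces being complete. -/
theorem stmt_17
    {X₁ X₂ : Type*} [MeasurableSpace X₁] [MeasurableSpace X₂]
    (μ₁ : Measure X₁) (μ₂ : Measure X₂)
    [SigmaFinite μ₁] [SigmaFinite μ₂]
    [μ₁.IsComplete] [μ₂.IsComplete]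
    (F : X₁ × X₂ → EReal) (hF : NullMeasurable F (μ₁.prod μ₂)) :
    Measurable fun x₁ => essInf (fun x₂ => F (x₁, x₂)) μ₂ := by
  have hae : AEMeasurable F (μ₁.prod μ₂) := hF.aemeasurable
  set G := hae.mk F with hGdef
  have hG : Measurable G := hae.measurable_mk
  have hFG : F =ᵐ[μ₁.prod μ₂] G := hae.ae_eq_mk
  have h1 : ∀ᵐ x₁ ∂μ₁, ∀ᵐ x₂ ∂μ₂, F (x₁, x₂) = G (x₁, x₂) := Measure.ae_ae_of_ae_prod hFG
  have h2 : (fun x₁ => essInf (fun x₂ => G (x₁, x₂)) μ₂)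
      =ᵐ[μ₁] fun x₁ => essInf (fun x₂ => F (x₁, x₂)) μ₂ := by
    filter_upwards [h1] with x₁ hx₁
    exact (essInf_congr_ae hx₁).symm
  exact (measurable_essInf_prod μ₂ G hG).congr_ae h2
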